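/- Let G be a finite group and let h be a positive integer. If q̃_h(G) > q̃_h(A_4) = (1/12)(1 + 1/3^{h-1} + 2/4^{h-1}), then G is supersolvable. (Here A_4 denotes the alternating group of degree 4, whose conjugacy class sizes are 1, 3, 4, 4.) -/

import Mathlib

set_option maxHeartbeats 1000000


/-- A finite group is supersolvable if it has a chain of subgroups, each normal in `G`,
from the trivial subgroup to the whole group, with cyclic successive quotients.
(The successive quotient `s (i+1) / s i` is cyclic iff `s (i+1)` is generated by
`s i` together with a single element.) -/
def IsSupersolvable (G : Type) [Group G] : Prop :=
  ∃ (n : ℕ) (s : Fin (n + 1) → Subgroup G),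
    (∀ i, (s i).Normal) ∧ s 0 = ⊥ ∧ s (Fin.last n) = ⊤ ∧
    ∀ i : Fin n, s i.castSucc ≤ s i.succ ∧
      ∃ x : G, s i.succ = s i.castSucc ⊔ Subgroup.zpowers x



open Subgroup Finset

section Helpers

variable {G : Type*} [Group G]

lemma conj_mem_carrier {x g y : G} (hy : y ∈ (ConjClasses.mk x).carrier) :
    g * y * g⁻¹ ∈ (ConjClasses.mk x).carrier := by
  rw [ConjClasses.mem_carrier_iff_mk_eq] at hy ⊢
  rw [← hy, ConjClasses.mk_eq_mk_iff_isConj]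
  exact (isConj_iff.2 ⟨g, rfl⟩).symm

lemma zpowers_normal_of_conj (z : G)
    (hz : ∀ g : G, g * z * g⁻¹ = z ∨ g * z * g⁻¹ = z⁻¹) :
    (Subgroup.zpowers z).Normal := by
  constructor
  intro m hm g
  obtain ⟨k, rfl⟩ := Subgroup.mem_zpowers_iff.1 hm
  have h1 : g * z ^ k * g⁻¹ = (g * z * g⁻¹) ^ k := by
    have := map_zpow (MulAut.conj g) z k
    simpa [MulAut.conj_apply] using this.symm
  rcases hz g with h | h <;> rw [h1, h]
  · exact Subgroup.zpow_mem _ (Subgroup.mem_zpowers z) k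
  · exact Subgroup.zpow_mem _ (Subgroup.inv_mem _ (Subgroup.mem_zpowers z)) k

lemma exists_zpowers_normal_of_small [Finite G] (x : G) (hx : x ≠ 1)
    (hc : Nat.card (ConjClasses.mk x).carrier ≤ 2) :
    ∃ z : G, z ≠ 1 ∧ (Subgroup.zpowers z).Normal := by
  have hxmem : x ∈ (ConjClasses.mk x).carrier := ConjClasses.mem_carrier_iff_mk_eq.2 rfl
  have hfin : (ConjClasses.mk x).carrier.Finite := Set.toFinite _
  rw [Nat.card_coe_set_eq] at hc
  have hpos : 0 < (ConjClasses.mk x).carrier.ncard :=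
    (Set.ncard_pos hfin).2 ⟨x, hxmem⟩
  have h12 : (ConjClasses.mk x).carrier.ncard = 1 ∨ (ConjClasses.mk x).carrier.ncard = 2 := by
    omega
  rcases h12 with h1 | h2
  · obtain ⟨a, ha⟩ := Set.ncard_eq_one.1 h1
    refine ⟨x, hx, zpowers_normal_of_conj _ (fun g => Or.inl ?_)⟩
    have h2 := conj_mem_carrier (g := g) hxmem
    rw [ha] at h2 hxmem
    rw [Set.mem_singleton_iff] at h2 hxmem
    rw [h2, hxmem]
  · obtain ⟨a, b, hab, hset⟩ := Set.ncard_eq_two.1 h2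
    refine ⟨a⁻¹ * b, fun hzz => hab (by rwa [inv_mul_eq_one] at hzz), zpowers_normal_of_conj _ (fun g => ?_)⟩
    have hamem : a ∈ (ConjClasses.mk x).carrier := by rw [hset]; exact Set.mem_insert _ _
    have hbmem : b ∈ (ConjClasses.mk x).carrier := by
      rw [hset]; exact Set.mem_insert_of_mem _ rfl
    have hga := conj_mem_carrier (g := g) hamem
    have hgb := conj_mem_carrier (g := g) hbmem
    rw [hset, Set.mem_insert_iff, Set.mem_singleton_iff] at hga hgb
    have key : g * (a⁻¹ * b) * g⁻¹ = (g * a * g⁻¹)⁻¹ * (g * b * g⁻¹) := by group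
    rcases hga with ha' | ha' <;> rcases hgb with hb' | hb'
    · exact absurd (mul_left_cancel (mul_right_cancel (ha'.trans hb'.symm))) hab
    · left; rw [key, ha', hb']
    · right; rw [key, ha', hb', mul_inv_rev, inv_inv]
    · exact absurd (mul_left_cancel (mul_right_cancel (ha'.trans hb'.symm))) hab

lemma carrier_one : (ConjClasses.mk (1 : G)).carrier = {(1 : G)} := by
  ext y
  simp only [ConjClasses.mem_carrier_iff_mk_eq, ConjClasses.mk_eq_mk_iff_isConj,
    Set.mem_singleton_iff]
  constructor
  · intro hy; exact (isConj_one_right.1 hy.symm)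
  · rintro rfl; exact IsConj.refl 1

lemma card_carrier_one : Nat.card (ConjClasses.mk (1 : G)).carrier = 1 := by
  rw [Nat.card_coe_set_eq, carrier_one, Set.ncard_singleton]

lemma card_carrier_pos [Finite G] (c : ConjClasses G) : 0 < Nat.card c.carrier := by
  obtain ⟨x, rfl⟩ := c.exists_rep
  have : x ∈ (ConjClasses.mk x).carrier := ConjClasses.mem_carrier_iff_mk_eq.2 rfl
  rw [Nat.card_coe_set_eq]
  exact (Set.ncard_pos (Set.toFinite _)).2 ⟨x, this⟩

lemma card_carrier_dvd [Fintype G] (c : ConjClasses G) :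
    Nat.card c.carrier ∣ Nat.card G := by
  classical
  obtain ⟨x, rfl⟩ := c.exists_rep
  rw [← ConjAct.orbit_eq_carrier_conjClasses]
  have h := MulAction.card_orbit_mul_card_stabilizer_eq_card_group (ConjAct G) x
  have hcard : Fintype.card (ConjAct G) = Nat.card G := by
    rw [← Nat.card_eq_fintype_card]
    exact Nat.card_congr (ConjAct.toConjAct (G := G)).toEquiv.symm
  rw [hcard] at h
  rw [Nat.card_eq_fintype_card]
  exact ⟨_, h.symm⟩

end Helpers

open Subgroup Finset

section Quot

variable {G : Type*} [Group G] {Q : Type*} [Group Q]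

lemma carrier_image (π : G →* Q) (hπ : Function.Surjective π) (x : G) :
    (ConjClasses.mk (π x)).carrier = π '' (ConjClasses.mk x).carrier := by
  ext y
  constructor
  · intro hy
    rw [ConjClasses.mem_carrier_iff_mk_eq, ConjClasses.mk_eq_mk_iff_isConj] at hy
    obtain ⟨c, hc⟩ := isConj_iff.1 hy.symm
    obtain ⟨g, rfl⟩ := hπ c
    refine ⟨g * x * g⁻¹, ?_, ?_⟩
    · rw [ConjClasses.mem_carrier_iff_mk_eq, ConjClasses.mk_eq_mk_iff_isConj]
      exact (isConj_iff.2 ⟨g, rfl⟩).symm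
    · simpa [map_mul] using hc
  · rintro ⟨w, hw, rfl⟩
    rw [ConjClasses.mem_carrier_iff_mk_eq, ConjClasses.mk_eq_mk_iff_isConj] at hw ⊢
    obtain ⟨g, hg⟩ := isConj_iff.1 hw
    exact isConj_iff.2 ⟨π g, by rw [← map_inv, ← map_mul, ← map_mul, hg]⟩

lemma card_carrier_quot_le [Finite G] (π : G →* Q) (hπ : Function.Surjective π) (x : G) :
    Nat.card (ConjClasses.mk (π x)).carrier ≤ Nat.card (ConjClasses.mk x).carrier := by
  rw [carrier_image π hπ x, Nat.card_coe_set_eq, Nat.card_coe_set_eq]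
  exact Set.ncard_image_le (Set.toFinite _)

lemma sum_comp_quotient [Fintype G] (N : Subgroup G) [N.Normal] [Fintype (G ⧸ N)]
    (F : G ⧸ N → ℝ) :
    ∑ x : G, F (QuotientGroup.mk' N x) = (Nat.card N : ℝ) * ∑ y : G ⧸ N, F y := by
  classical
  rw [← Finset.sum_fiberwise Finset.univ (QuotientGroup.mk' N)
    (fun x => F (QuotientGroup.mk' N x)), Finset.mul_sum]
  refine Finset.sum_congr rfl fun y _ => ?_
  rw [Finset.sum_congr rfl (fun x hx => by rw [(Finset.mem_filter.1 hx).2] :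
      ∀ x ∈ Finset.univ.filter (fun x => QuotientGroup.mk' N x = y),
        F (QuotientGroup.mk' N x) = F y),
    Finset.sum_const, nsmul_eq_mul]
  congr 1
  obtain ⟨x0, hx0⟩ := QuotientGroup.mk'_surjective N y
  have h1 : (Finset.univ.filter (fun x => QuotientGroup.mk' N x = y)).card
      = Fintype.card {x : G // QuotientGroup.mk' N x = y} := (Fintype.card_subtype _).symm
  rw [h1, ← Nat.card_eq_fintype_card]
  have e : {x : G // QuotientGroup.mk' N x = y} ≃ N :=
    { toFun := fun p => ⟨x0⁻¹ * p.1, by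
        refine (QuotientGroup.eq_one_iff _).mp ?_
        show (QuotientGroup.mk' N) (x0⁻¹ * p.1) = 1
        rw [map_mul, map_inv, hx0, p.2, inv_mul_cancel]⟩
      invFun := fun n => ⟨x0 * n.1, by
        have : (QuotientGroup.mk' N) n.1 = 1 := (QuotientGroup.eq_one_iff _).mpr n.2
        rw [map_mul, this, mul_one, hx0]⟩
      left_inv := fun p => by ext; simp
      right_inv := fun n => by ext; simp }
  rw [Nat.card_congr e]

lemma avg_le_quotient [Fintype G] (N : Subgroup G) [N.Normal] [Fintype (G ⧸ N)] (e : ℕ) :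
    (Nat.card G : ℝ)⁻¹ * ∑ x : G, ((Nat.card (ConjClasses.mk x).carrier : ℝ))⁻¹ ^ e
      ≤ (Nat.card (G ⧸ N) : ℝ)⁻¹ *
        ∑ y : G ⧸ N, ((Nat.card (ConjClasses.mk y).carrier : ℝ))⁻¹ ^ e := by
  set π := QuotientGroup.mk' N with hπdef
  have hπ : Function.Surjective π := QuotientGroup.mk'_surjective N
  have hstep : ∀ x : G, ((Nat.card (ConjClasses.mk x).carrier : ℝ))⁻¹ ^ e
      ≤ ((Nat.card (ConjClasses.mk (π x)).carrier : ℝ))⁻¹ ^ e := by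
    intro x
    have hle := card_carrier_quot_le π hπ x
    have hpos : 0 < Nat.card (ConjClasses.mk (π x)).carrier := card_carrier_pos _
    have h0 : (0 : ℝ) < (Nat.card (ConjClasses.mk (π x)).carrier : ℝ) := by
      exact_mod_cast hpos
    refine pow_le_pow_left₀ (by positivity) ?_ e
    exact inv_anti₀ h0 (by exact_mod_cast hle)
  have hsumle : ∑ x : G, ((Nat.card (ConjClasses.mk x).carrier : ℝ))⁻¹ ^ e
      ≤ ∑ x : G, ((Nat.card (ConjClasses.mk (π x)).carrier : ℝ))⁻¹ ^ e :=
    Finset.sum_le_sum fun x _ => hstep x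
  have hfib := sum_comp_quotient N
    (fun y => ((Nat.card (ConjClasses.mk y).carrier : ℝ))⁻¹ ^ e)
  have hG : (Nat.card G : ℝ) = (Nat.card (G ⧸ N) : ℝ) * (Nat.card N : ℝ) := by
    exact_mod_cast Subgroup.card_eq_card_quotient_mul_card_subgroup N
  have hNpos : (0 : ℝ) < (Nat.card N : ℝ) := by
    have : 0 < Nat.card N := Nat.card_pos
    exact_mod_cast this
  have hQpos : (0 : ℝ) < (Nat.card (G ⧸ N) : ℝ) := by
    have : 0 < Nat.card (G ⧸ N) := Nat.card_pos
    exact_mod_cast this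
  calc (Nat.card G : ℝ)⁻¹ * ∑ x : G, ((Nat.card (ConjClasses.mk x).carrier : ℝ))⁻¹ ^ e
      ≤ (Nat.card G : ℝ)⁻¹ * ∑ x : G, ((Nat.card (ConjClasses.mk (π x)).carrier : ℝ))⁻¹ ^ e := by
        apply mul_le_mul_of_nonneg_left hsumle
        positivity
    _ = (Nat.card (G ⧸ N) : ℝ)⁻¹ *
        ∑ y : G ⧸ N, ((Nat.card (ConjClasses.mk y).carrier : ℝ))⁻¹ ^ e := by
        rw [hfib, hG]
        field_simp

lemma finsum_class_eq_elem {H : Type*} [Group H] [Fintype H] (t : ℕ) :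
    ∑ᶠ c : ConjClasses H, ((Nat.card c.carrier : ℝ))⁻¹ ^ t
      = ∑ x : H, ((Nat.card (ConjClasses.mk x).carrier : ℝ))⁻¹ ^ (t + 1) := by
  classical
  letI : Fintype (ConjClasses H) := Fintype.ofFinite _
  rw [finsum_eq_sum_of_fintype]
  rw [← Finset.sum_fiberwise Finset.univ (ConjClasses.mk)
    (fun x => ((Nat.card (ConjClasses.mk x).carrier : ℝ))⁻¹ ^ (t + 1))]
  refine Finset.sum_congr rfl fun c _ => ?_
  rw [Finset.sum_congr rfl (fun x hx => by rw [(Finset.mem_filter.1 hx).2] :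
      ∀ x ∈ Finset.univ.filter (fun x => ConjClasses.mk x = c),
        ((Nat.card (ConjClasses.mk x).carrier : ℝ))⁻¹ ^ (t + 1)
          = ((Nat.card c.carrier : ℝ))⁻¹ ^ (t + 1)),
    Finset.sum_const, nsmul_eq_mul]
  have hfilter : (Finset.univ.filter (fun x => ConjClasses.mk x = c)).card
      = Nat.card c.carrier := by
    rw [Nat.card_coe_set_eq, Set.ncard_eq_toFinset_card']
    congr 1
    ext y
    simp [ConjClasses.mem_carrier_iff_mk_eq]
  rw [hfilter]
  have hpos : 0 < Nat.card c.carrier := card_carrier_pos _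
  have h0 : ((Nat.card c.carrier : ℝ)) ≠ 0 := by positivity
  set m : ℝ := (Nat.card c.carrier : ℝ) with hm
  rw [pow_succ' (a := m⁻¹), ← mul_assoc, mul_inv_cancel₀ h0, one_mul]

end Quot

open Subgroup Finset
open scoped Pointwise

section SS

lemma isSupersolvable_of_subsingleton (G : Type) [Group G] [Subsingleton G] :
    IsSupersolvable G := by
  refine ⟨0, fun _ => ⊥, fun i => inferInstance, rfl, ?_, fun i => i.elim0⟩
  apply Subgroup.ext
  intro x
  simp [Subgroup.mem_bot, Subsingleton.elim x 1]

variable {G : Type} [Group G]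

lemma comap_sup_zpowers {Q : Type*} [Group Q] (π : G →* Q) (hπ : Function.Surjective π)
    (A : Subgroup Q) (hA : A.Normal) (z : G) :
    Subgroup.comap π (A ⊔ Subgroup.zpowers (π z))
      = Subgroup.comap π A ⊔ Subgroup.zpowers z := by
  haveI := hA
  apply le_antisymm
  · intro g hg
    have hmem : π g ∈ A ⊔ Subgroup.zpowers (π z) := hg
    have hset : ((A ⊔ Subgroup.zpowers (π z) : Subgroup Q) : Set Q)
        = (A : Set Q) * (Subgroup.zpowers (π z) : Set Q) := Subgroup.normal_mul A _
    rw [← Subgroup.mem_carrier] at hmem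
    have : π g ∈ (A : Set Q) * (Subgroup.zpowers (π z) : Set Q) := by
      rw [← hset]; exact hmem
    obtain ⟨a, ha, w, hw, hmul⟩ := Set.mem_mul.1 this
    obtain ⟨k, hk⟩ := Subgroup.mem_zpowers_iff.1 hw
    have hga : g * (z ^ k)⁻¹ ∈ Subgroup.comap π A := by
      rw [Subgroup.mem_comap, map_mul, map_inv, map_zpow, hk]
      have : π g = a * w := hmul.symm
      rw [this, ← hk]
      group
      simpa using ha
    have hdecomp : g = (g * (z ^ k)⁻¹) * z ^ k := by group
    rw [hdecomp]
    exact Subgroup.mul_mem _ (Subgroup.mem_sup_left hga)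
      (Subgroup.mem_sup_right (Subgroup.zpow_mem _ (Subgroup.mem_zpowers z) k))
  · refine sup_le (Subgroup.comap_mono le_sup_left) ?_
    rw [Subgroup.zpowers_le]
    exact Subgroup.mem_comap.2 (Subgroup.mem_sup_right (Subgroup.mem_zpowers _))

lemma quotient_step {x : G} (hN : (Subgroup.zpowers x).Normal) :
    IsSupersolvable (G ⧸ Subgroup.zpowers x) → IsSupersolvable G := by
  haveI := hN
  rintro ⟨m, s, hnorm, h0, hlast, hstep⟩
  set π := QuotientGroup.mk' (Subgroup.zpowers x) with hπdef
  have hπ : Function.Surjective π := QuotientGroup.mk'_surjective _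
  refine ⟨m + 1, Fin.cons ⊥ (fun i => Subgroup.comap π (s i)), ?_, ?_, ?_, ?_⟩
  · intro i
    refine Fin.cases ?_ ?_ i
    · rw [Fin.cons_zero]; infer_instance
    · intro j; rw [Fin.cons_succ]; exact (hnorm j).comap π
  · rw [Fin.cons_zero]
  · rw [← Fin.succ_last, Fin.cons_succ, hlast, Subgroup.comap_top]
  · intro i
    refine Fin.cases ?_ ?_ i
    · constructor
      · rw [Fin.castSucc_zero, Fin.cons_zero]; exact bot_le
      · refine ⟨x, ?_⟩
        rw [Fin.castSucc_zero, Fin.cons_zero, bot_sup_eq, Fin.cons_succ, h0,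
          MonoidHom.comap_bot, QuotientGroup.ker_mk']
    · intro j
      have e1 : (j.succ).castSucc = (j.castSucc).succ := (Fin.succ_castSucc j).symm
      constructor
      · rw [e1, Fin.cons_succ, Fin.cons_succ]
        exact Subgroup.comap_mono (hstep j).1
      · obtain ⟨zb, hz⟩ := (hstep j).2
        obtain ⟨z, rfl⟩ := hπ zb
        refine ⟨z, ?_⟩
        rw [e1, Fin.cons_succ, Fin.cons_succ, hz,
          comap_sup_zpowers π hπ _ (hnorm _)]

end SS


section RealLemmas

lemma myDivHelper (nR X Y : ℝ) (hn : 0 < nR) (h : 12 * X ≤ nR * Y) :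
    nR⁻¹ * X ≤ (1 / 12) * Y := by
  rw [inv_mul_eq_div, one_div_mul_eq_div]
  rw [div_le_div_iff₀ hn (by norm_num)]
  linarith

lemma real_main (N a B u v : ℝ) (hN : 22 ≤ N) (ha : 0 ≤ a) (hB : 0 ≤ B)
    (hsum : 3 * a + B = N - 1) (hu0 : 0 < u) (hu3 : u ≤ 1 / 3) (hv0 : 0 < v)
    (hvu : v ≤ 3 / 4 * u) (hv9 : 9 / 4 * u ^ 2 ≤ v) :
    12 * (1 + a * u + B / 4 * v) ≤ N * (1 + u + 2 * v) := by
  have hBs : B = N - 1 - 3 * a := by linarith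
  subst hBs
  have hN0 : (0:ℝ) < N := by linarith
  have h1 : 0 ≤ (N - 1 - 3 * a) * (u - 3 / 4 * v) := by nlinarith
  have h2 : 0 ≤ (9 * N * u - (3 * N - 4)) ^ 2 := sq_nonneg _
  have h3 : 0 ≤ v - 9 / 4 * u ^ 2 := by linarith
  have h4 : 0 ≤ 9 * N ^ 2 - 192 * N - 16 := by nlinarith
  have t1 : 0 ≤ N * ((N - 1 - 3 * a) * (u - 3 / 4 * v)) := mul_nonneg hN0.le h1
  have t2 : 0 ≤ N * N * (v - 9 / 4 * u ^ 2) := mul_nonneg (mul_nonneg hN0.le hN0.le) h3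
  nlinarith [t1, t2, h2, h4, mul_pos hN0 hN0]

lemma real_light (N s u v : ℝ) (hN : 12 ≤ N) (hs : 0 ≤ s) (h4 : 4 * s ≤ N - 1)
    (hu0 : 0 < u) (hu3 : u ≤ 1 / 3) (hv0 : 0 < v) (hvu : v ≤ 3 / 4 * u) :
    12 * (1 + s * v) ≤ N * (1 + u + 2 * v) := by
  nlinarith [mul_nonneg (by linarith : (0:ℝ) ≤ N - 3) (by linarith : 0 ≤ 3 / 4 * u - v),
    mul_nonneg hv0.le (by linarith : 0 ≤ N - 1 - 4 * s)]

end RealLemmas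


section PowFacts

lemma invpow_anti {a : ℝ} (ha : 1 ≤ a) {s tt : ℕ} (h : s ≤ tt) :
    (a⁻¹) ^ tt ≤ (a⁻¹) ^ s := by
  apply pow_le_pow_of_le_one (by positivity) _ h
  rw [inv_le_one_iff₀]
  right; exact ha

lemma invpow_le_invpow {a b : ℝ} (ha : 0 < a) (hab : a ≤ b) (t : ℕ) :
    (b⁻¹) ^ t ≤ (a⁻¹) ^ t := by
  have hb : 0 < b := lt_of_lt_of_le ha hab
  exact pow_le_pow_left₀ (by positivity) (inv_anti₀ ha hab) t


lemma hvu_fact (t : ℕ) (ht : 1 ≤ t) : ((4:ℝ)⁻¹) ^ t ≤ 3 / 4 * ((3:ℝ)⁻¹) ^ t := by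
  have h1 : ((4:ℝ)⁻¹) ^ t = ((3:ℝ)/4) ^ t * ((3:ℝ)⁻¹) ^ t := by
    rw [← mul_pow]; norm_num
  have h2 : ((3:ℝ)/4) ^ t ≤ 3 / 4 := by
    calc ((3:ℝ)/4) ^ t ≤ ((3:ℝ)/4) ^ 1 :=
      pow_le_pow_of_le_one (by norm_num) (by norm_num) ht
    _ = 3 / 4 := pow_one _
  have h3 : (0:ℝ) ≤ ((3:ℝ)⁻¹) ^ t := by positivity
  nlinarith

lemma hv9_fact (t : ℕ) (ht : 1 ≤ t) : 9 / 4 * (((3:ℝ)⁻¹) ^ t) ^ 2 ≤ ((4:ℝ)⁻¹) ^ t := by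
  have h1 : (((3:ℝ)⁻¹) ^ t) ^ 2 = ((9:ℝ)⁻¹) ^ t := by
    rw [← pow_mul, mul_comm, pow_mul]; norm_num
  have h2 : ((4:ℝ)⁻¹) ^ t = ((9:ℝ)/4) ^ t * ((9:ℝ)⁻¹) ^ t := by
    rw [← mul_pow]; norm_num
  have h3 : (9:ℝ)/4 ≤ ((9:ℝ)/4) ^ t := le_self_pow₀ (by norm_num) (by omega)
  have h4 : (0:ℝ) ≤ ((9:ℝ)⁻¹) ^ t := by positivity
  rw [h1, h2]
  nlinarith

end PowFacts


section Terminal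

lemma terminal_contra (G : Type) [Group G] [Fintype G] (t : ℕ)
    (hcyc : ∀ z : G, z ≠ 1 → ¬ (Subgroup.zpowers z).Normal)
    (hn2 : 2 ≤ Nat.card G)
    (hq : (Nat.card G : ℝ)⁻¹ * ∑ᶠ c : ConjClasses G, ((Nat.card c.carrier : ℝ))⁻¹ ^ t
          > (1 / 12) * (1 + 1 / 3 ^ t + 2 / 4 ^ t)) : False := by
  classical
  letI : Fintype (ConjClasses G) := Fintype.ofFinite _
  rw [finsum_eq_sum_of_fintype] at hq
  set n := Nat.card G with hn
  -- basic facts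
  have hsumN : ∑ c : ConjClasses G, Nat.card c.carrier = n := by
    have h := Group.sum_card_conj_classes_eq_card G
    rw [finsum_eq_sum_of_fintype] at h
    rw [hn, ← h]
    exact Finset.sum_congr rfl fun c _ => Nat.card_coe_set_eq _
  set S : Finset (ConjClasses G) := Finset.univ.erase (ConjClasses.mk 1) with hSdef
  have hS : ∑ c ∈ S, Nat.card c.carrier = n - 1 := by
    have h : Nat.card ((ConjClasses.mk (1:G)).carrier) + ∑ c ∈ S, Nat.card c.carrier
        = ∑ c : ConjClasses G, Nat.card c.carrier :=
      Finset.add_sum_erase Finset.univ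
        (fun c : ConjClasses G => Nat.card c.carrier) (Finset.mem_univ (ConjClasses.mk 1))
    rw [card_carrier_one, hsumN] at h
    omega
  have hsum_split : ∑ c : ConjClasses G, ((Nat.card c.carrier : ℝ))⁻¹ ^ t
      = 1 + ∑ c ∈ S, ((Nat.card c.carrier : ℝ))⁻¹ ^ t := by
    have h : ((Nat.card ((ConjClasses.mk (1:G)).carrier) : ℝ))⁻¹ ^ t
          + ∑ c ∈ S, ((Nat.card c.carrier : ℝ))⁻¹ ^ t
        = ∑ c : ConjClasses G, ((Nat.card c.carrier : ℝ))⁻¹ ^ t :=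
      Finset.add_sum_erase Finset.univ
        (fun c : ConjClasses G => ((Nat.card c.carrier : ℝ))⁻¹ ^ t)
        (Finset.mem_univ (ConjClasses.mk 1))
    rw [card_carrier_one, Nat.cast_one, inv_one, one_pow] at h
    linarith
  have hmin : ∀ c ∈ S, 3 ≤ Nat.card c.carrier := by
    intro c hc
    obtain ⟨x, rfl⟩ := c.exists_rep
    have hx : x ≠ 1 := by
      rintro rfl
      exact (Finset.mem_erase.1 hc).1 rfl
    by_contra hlt
    obtain ⟨z, hz1, hzN⟩ := exists_zpowers_normal_of_small x hx (by omega)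
    exact hcyc z hz1 hzN
  have hdvd : ∀ c ∈ S, Nat.card c.carrier ∣ n := fun c _ => card_carrier_dvd c
  have hub : ∀ c ∈ S, Nat.card c.carrier ≤ n - 1 := by
    intro c hc
    have h := Finset.single_le_sum (f := fun c : ConjClasses G => Nat.card c.carrier)
      (fun i _ => Nat.zero_le _) hc
    have h' : Nat.card c.carrier ≤ ∑ c ∈ S, Nat.card c.carrier := h
    omega
  have hn0 : (0:ℝ) < (n : ℝ) := by exact_mod_cast (by omega : 0 < n)
  clear_value n
  -- filters
  set A : Finset (ConjClasses G) := S.filter (fun c => Nat.card c.carrier = 3) with hA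
  set R : Finset (ConjClasses G) := S.filter (fun c => ¬ Nat.card c.carrier = 3) with hR
  have hcards : A.card + R.card = S.card :=
    Finset.card_filter_add_card_filter_not _
  have hAsum : ∑ c ∈ A, Nat.card c.carrier = A.card * 3 :=
    Finset.sum_const_nat (fun c hc => (Finset.mem_filter.1 hc).2)
  have hsplitN : ∑ c ∈ A, Nat.card c.carrier + ∑ c ∈ R, Nat.card c.carrier = n - 1 := by
    rw [Finset.sum_filter_add_sum_filter_not]; exact hS
  have h4R : ∀ c ∈ R, 4 ≤ Nat.card c.carrier := by
    intro c hc
    have h1 := hmin c (Finset.mem_filter.1 hc).1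
    have h2 := (Finset.mem_filter.1 hc).2
    omega
  have hR4 : 4 * R.card ≤ ∑ c ∈ R, Nat.card c.carrier := by
    have := Finset.card_nsmul_le_sum R (fun c => Nat.card c.carrier) 4 h4R
    simpa [smul_eq_mul, mul_comm] using this
  have hA3 : A.card ≠ 0 → 3 ∣ n := by
    intro h
    obtain ⟨c, hc⟩ := Finset.card_ne_zero.1 h
    have h3 := (Finset.mem_filter.1 hc).2
    have := hdvd c (Finset.mem_filter.1 hc).1
    rwa [h3] at this
  refine absurd hq (not_lt.2 ?_)
  rw [hsum_split]
  rcases Nat.eq_zero_or_pos t with rfl | ht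
  · -- t = 0 case
    have hcount : 3 * (1 + S.card) ≤ n := by
      rcases Nat.lt_or_ge R.card 2 with hRlt | hRge
      · have hR01 : R.card = 0 ∨ R.card = 1 := by omega
        rcases hR01 with h0 | h1
        · have hRempty : R = ∅ := Finset.card_eq_zero.1 h0
          have hsum0 : ∑ c ∈ R, Nat.card c.carrier = 0 := by rw [hRempty]; simp
          by_cases hA0 : A.card = 0
          · omega
          · have h3n := hA3 hA0; omega
        · obtain ⟨c1, hc1⟩ := Finset.card_eq_one.1 h1
          have hc1R : c1 ∈ R := by rw [hc1]; exact Finset.mem_singleton_self c1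
          have hsum1 : ∑ c ∈ R, Nat.card c.carrier = Nat.card c1.carrier := by
            rw [hc1]; simp
          have hd := hdvd c1 (Finset.mem_filter.1 hc1R).1
          have h4 := h4R c1 hc1R
          by_cases h44 : Nat.card c1.carrier = 4
          · rw [h44] at hd hsum1
            by_cases hA0 : A.card = 0
            · omega
            · have h3n := hA3 hA0; omega
          · omega
      · omega
    simp only [pow_zero]
    rw [Finset.sum_const, nsmul_eq_mul, mul_one]
    refine myDivHelper _ _ _ hn0 ?_
    have hc' : (3:ℝ) * (1 + (S.card : ℝ)) ≤ (n : ℝ) := by exact_mod_cast hcount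
    norm_num
    linarith
  · -- t ≥ 1
    have hu0 : (0:ℝ) < ((3:ℝ)⁻¹) ^ t := by positivity
    have hv0 : (0:ℝ) < ((4:ℝ)⁻¹) ^ t := by positivity
    have hu3 : ((3:ℝ)⁻¹) ^ t ≤ 1 / 3 := by
      have := invpow_anti (a := 3) (by norm_num) ht
      simpa using this
    have hvu := hvu_fact t ht
    have hv9 := hv9_fact t ht
    have hrhs : (1 / 12 : ℝ) * (1 + 1 / 3 ^ t + 2 / 4 ^ t)
        = (1 / 12) * (1 + ((3:ℝ)⁻¹) ^ t + 2 * ((4:ℝ)⁻¹) ^ t) := by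
      rw [inv_pow, inv_pow]; ring
    rw [hrhs]
    -- per-class real bounds
    have hAT : ∑ c ∈ A, ((Nat.card c.carrier : ℝ))⁻¹ ^ t = (A.card : ℝ) * ((3:ℝ)⁻¹) ^ t := by
      rw [Finset.sum_congr rfl (fun c hc => by
        rw [(Finset.mem_filter.1 hc).2, Nat.cast_ofNat] :
        ∀ c ∈ A, ((Nat.card c.carrier : ℝ))⁻¹ ^ t = ((3:ℝ)⁻¹) ^ t)]
      rw [Finset.sum_const, nsmul_eq_mul]
    have hsplitT : ∑ c ∈ S, ((Nat.card c.carrier : ℝ))⁻¹ ^ t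
        = ∑ c ∈ A, ((Nat.card c.carrier : ℝ))⁻¹ ^ t
          + ∑ c ∈ R, ((Nat.card c.carrier : ℝ))⁻¹ ^ t := by
      rw [Finset.sum_filter_add_sum_filter_not]
    by_cases h22 : 22 ≤ n
    · -- analytic case
      have hRT : ∑ c ∈ R, ((Nat.card c.carrier : ℝ))⁻¹ ^ t
          ≤ ((∑ c ∈ R, Nat.card c.carrier : ℕ) : ℝ) / 4 * ((4:ℝ)⁻¹) ^ t := by
        calc ∑ c ∈ R, ((Nat.card c.carrier : ℝ))⁻¹ ^ t
            ≤ ∑ c ∈ R, (Nat.card c.carrier : ℝ) / 4 * ((4:ℝ)⁻¹) ^ t := by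
              refine Finset.sum_le_sum fun c hc => ?_
              have h4 := h4R c hc
              have h4' : (4:ℝ) ≤ (Nat.card c.carrier : ℝ) := by exact_mod_cast h4
              calc ((Nat.card c.carrier : ℝ))⁻¹ ^ t ≤ ((4:ℝ)⁻¹) ^ t :=
                invpow_le_invpow (by norm_num) h4' t
              _ ≤ (Nat.card c.carrier : ℝ) / 4 * ((4:ℝ)⁻¹) ^ t := by
                refine le_mul_of_one_le_left hv0.le ?_
                rw [le_div_iff₀ (by norm_num)]
                linarith
        _ = ((∑ c ∈ R, Nat.card c.carrier : ℕ) : ℝ) / 4 * ((4:ℝ)⁻¹) ^ t := by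
              rw [← Finset.sum_mul, ← Finset.sum_div, Nat.cast_sum]
      have hsumR : 3 * (A.card : ℝ) + ((∑ c ∈ R, Nat.card c.carrier : ℕ) : ℝ)
          = (n : ℝ) - 1 := by
        have h1 : A.card * 3 + ∑ c ∈ R, Nat.card c.carrier = n - 1 := by omega
        have h2 : ((A.card * 3 + ∑ c ∈ R, Nat.card c.carrier : ℕ) : ℝ)
            = ((n - 1 : ℕ) : ℝ) := congrArg (fun k : ℕ => (k : ℝ)) h1
        rw [Nat.cast_add, Nat.cast_mul, Nat.cast_sub (by omega : 1 ≤ n)] at h2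
        push_cast at h2 ⊢
        linarith
      refine myDivHelper _ _ _ hn0 ?_
      have hmain := real_main (n : ℝ) (A.card : ℝ)
        ((∑ c ∈ R, Nat.card c.carrier : ℕ) : ℝ) (((3:ℝ)⁻¹) ^ t) (((4:ℝ)⁻¹) ^ t)
        (by exact_mod_cast h22) (by positivity) (by positivity) hsumR hu0 hu3 hv0 hvu hv9
      rw [hsplitT, hAT]
      nlinarith [hRT, hmain]
    · -- n ≤ 21
      push_neg at h22
      by_cases h3n : (3:ℕ) ∣ n
      · have h21 : n ≤ 21 := by omega
        interval_cases n
        · exact absurd h3n (by norm_num)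
        · -- n = 3
          exfalso
          have hempty : S = ∅ := Finset.eq_empty_of_forall_notMem fun c hc => by
            have := hmin c hc; have := hub c hc; omega
          rw [hempty] at hS; simp at hS
        · exact absurd h3n (by norm_num)
        · exact absurd h3n (by norm_num)
        · -- n = 6
          exfalso
          have hval : ∀ c ∈ S, Nat.card c.carrier = 3 := by
            intro c hc
            have h1 := hmin c hc; have h2 := hub c hc; have h3 := hdvd c hc
            generalize hgen : Nat.card c.carrier = k at h1 h2 h3 ⊢
            interval_cases k <;> omega
          have := Finset.sum_const_nat hval
          omega
        · exact absurd h3n (by norm_num)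
        · exact absurd h3n (by norm_num)
        · -- n = 9
          exfalso
          have hval : ∀ c ∈ S, Nat.card c.carrier = 3 := by
            intro c hc
            have h1 := hmin c hc; have h2 := hub c hc; have h3 := hdvd c hc
            generalize hgen : Nat.card c.carrier = k at h1 h2 h3 ⊢
            interval_cases k <;> omega
          have := Finset.sum_const_nat hval
          omega
        · exact absurd h3n (by norm_num)
        · exact absurd h3n (by norm_num)
        · -- n = 12 : the A4 configuration, equality
          have hval : ∀ c ∈ R, Nat.card c.carrier = 4 ∨ Nat.card c.carrier = 6 := by
            intro c hc
            have h1 := h4R c hc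
            have h2 := hub c (Finset.mem_filter.1 hc).1
            have h3 := hdvd c (Finset.mem_filter.1 hc).1
            generalize hgen : Nat.card c.carrier = k at h1 h2 h3 ⊢
            interval_cases k <;> omega
          set B4 : Finset (ConjClasses G) := R.filter (fun c => Nat.card c.carrier = 4)
            with hB4def
          set C6 : Finset (ConjClasses G) := R.filter (fun c => ¬ Nat.card c.carrier = 4)
            with hC6def
          have hB4sum : ∑ c ∈ B4, Nat.card c.carrier = B4.card * 4 :=
            Finset.sum_const_nat (fun c hc => (Finset.mem_filter.1 hc).2)
          have hC6val : ∀ c ∈ C6, Nat.card c.carrier = 6 := by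
            intro c hc
            have h := hval c (Finset.mem_filter.1 hc).1
            have h2 := (Finset.mem_filter.1 hc).2
            tauto
          have hC6sum : ∑ c ∈ C6, Nat.card c.carrier = C6.card * 6 :=
            Finset.sum_const_nat hC6val
          have hRsplitN : ∑ c ∈ R, Nat.card c.carrier
              = ∑ c ∈ B4, Nat.card c.carrier + ∑ c ∈ C6, Nat.card c.carrier :=
            (Finset.sum_filter_add_sum_filter_not R _ _).symm
          have hcounts : A.card = 1 ∧ B4.card = 2 ∧ C6.card = 0 := by omega
          have hC6e : C6 = ∅ := Finset.card_eq_zero.1 hcounts.2.2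
          have hB4T : ∑ c ∈ B4, ((Nat.card c.carrier : ℝ))⁻¹ ^ t
              = (B4.card : ℝ) * ((4:ℝ)⁻¹) ^ t := by
            rw [Finset.sum_congr rfl (fun c hc => by
              rw [(Finset.mem_filter.1 hc).2, Nat.cast_ofNat] :
              ∀ c ∈ B4, ((Nat.card c.carrier : ℝ))⁻¹ ^ t = ((4:ℝ)⁻¹) ^ t)]
            rw [Finset.sum_const, nsmul_eq_mul]
          have hRT' : ∑ c ∈ R, ((Nat.card c.carrier : ℝ))⁻¹ ^ t
              = ∑ c ∈ B4, ((Nat.card c.carrier : ℝ))⁻¹ ^ t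
                + ∑ c ∈ C6, ((Nat.card c.carrier : ℝ))⁻¹ ^ t :=
            (Finset.sum_filter_add_sum_filter_not R _ _).symm
          have hC6T : ∑ c ∈ C6, ((Nat.card c.carrier : ℝ))⁻¹ ^ t = 0 := by
            rw [hC6e]; simp
          rw [hsplitT, hAT, hRT', hB4T, hC6T, hcounts.1, hcounts.2.1]
          apply le_of_eq
          push_cast
          ring
        · exact absurd h3n (by norm_num)
        · exact absurd h3n (by norm_num)
        · -- n = 15
          have hval : ∀ c ∈ R, Nat.card c.carrier = 5 := by
            intro c hc
            have h1 := h4R c hc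
            have h2 := hub c (Finset.mem_filter.1 hc).1
            have h3 := hdvd c (Finset.mem_filter.1 hc).1
            generalize hgen : Nat.card c.carrier = k at h1 h2 h3 ⊢
            interval_cases k <;> omega
          have hRsum : ∑ c ∈ R, Nat.card c.carrier = R.card * 5 :=
            Finset.sum_const_nat hval
          have hcounts : A.card = 3 ∧ R.card = 1 := by omega
          have hRT : ∑ c ∈ R, ((Nat.card c.carrier : ℝ))⁻¹ ^ t
              = (R.card : ℝ) * ((5:ℝ)⁻¹) ^ t := by
            rw [Finset.sum_congr rfl (fun c hc => by
              rw [hval c hc, Nat.cast_ofNat] :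
              ∀ c ∈ R, ((Nat.card c.carrier : ℝ))⁻¹ ^ t = ((5:ℝ)⁻¹) ^ t)]
            rw [Finset.sum_const, nsmul_eq_mul]
          rw [hsplitT, hAT, hRT, hcounts.1, hcounts.2]
          refine myDivHelper _ _ _ hn0 ?_
          rcases Nat.lt_or_ge t 2 with ht2 | ht2
          · have ht1 : t = 1 := by omega
            subst ht1
            norm_num
          · have hu9 : ((3:ℝ)⁻¹) ^ t ≤ 1 / 9 := by
              have h := invpow_anti (a := 3) (by norm_num) ht2
              norm_num at h
              linarith
            have hw25 : ((5:ℝ)⁻¹) ^ t ≤ 1 / 25 := by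
              have h := invpow_anti (a := 5) (by norm_num) ht2
              norm_num at h
              linarith
            push_cast
            nlinarith [hv0]
        · exact absurd h3n (by norm_num)
        · exact absurd h3n (by norm_num)
        · -- n = 18
          exfalso
          have hval : ∀ c ∈ S, 3 ∣ Nat.card c.carrier := by
            intro c hc
            have h1 := hmin c hc; have h2 := hub c hc; have h3 := hdvd c hc
            generalize hgen : Nat.card c.carrier = k at h1 h2 h3 ⊢
            interval_cases k <;> omega
          have hddd := Finset.dvd_sum hval
          rw [hS] at hddd
          omega
        · exact absurd h3n (by norm_num)
        · exact absurd h3n (by norm_num)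
        · -- n = 21
          have hval : ∀ c ∈ R, Nat.card c.carrier = 7 := by
            intro c hc
            have h1 := h4R c hc
            have h2 := hub c (Finset.mem_filter.1 hc).1
            have h3 := hdvd c (Finset.mem_filter.1 hc).1
            generalize hgen : Nat.card c.carrier = k at h1 h2 h3 ⊢
            interval_cases k <;> omega
          have hRsum : ∑ c ∈ R, Nat.card c.carrier = R.card * 7 :=
            Finset.sum_const_nat hval
          have hcounts : A.card = 2 ∧ R.card = 2 := by omega
          have hRT : ∑ c ∈ R, ((Nat.card c.carrier : ℝ))⁻¹ ^ t
              = (R.card : ℝ) * ((7:ℝ)⁻¹) ^ t := by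
            rw [Finset.sum_congr rfl (fun c hc => by
              rw [hval c hc, Nat.cast_ofNat] :
              ∀ c ∈ R, ((Nat.card c.carrier : ℝ))⁻¹ ^ t = ((7:ℝ)⁻¹) ^ t)]
            rw [Finset.sum_const, nsmul_eq_mul]
          rw [hsplitT, hAT, hRT, hcounts.1, hcounts.2]
          refine myDivHelper _ _ _ hn0 ?_
          have hw7 : ((7:ℝ)⁻¹) ^ t ≤ 1 / 7 := by
            have h := invpow_anti (a := 7) (by norm_num) ht
            norm_num at h
            linarith
          push_cast
          nlinarith [hv0, hu0, hu3]
      · -- ¬ 3 ∣ n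
        have hall4 : ∀ c ∈ S, 4 ≤ Nat.card c.carrier := by
          intro c hc
          have h1 := hmin c hc
          by_cases hc3 : Nat.card c.carrier = 3
          · exact absurd (hc3 ▸ hdvd c hc) h3n
          · omega
        by_cases h12 : 12 ≤ n
        · -- light inequality
          have hsT : ∑ c ∈ S, ((Nat.card c.carrier : ℝ))⁻¹ ^ t
              ≤ (S.card : ℝ) * ((4:ℝ)⁻¹) ^ t := by
            calc ∑ c ∈ S, ((Nat.card c.carrier : ℝ))⁻¹ ^ t
                ≤ ∑ c ∈ S, ((4:ℝ)⁻¹) ^ t := by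
                  refine Finset.sum_le_sum fun c hc => ?_
                  exact invpow_le_invpow (by norm_num)
                    (by exact_mod_cast hall4 c hc) t
            _ = (S.card : ℝ) * ((4:ℝ)⁻¹) ^ t := by
                  rw [Finset.sum_const, nsmul_eq_mul]
          have hS4 : 4 * S.card ≤ n - 1 := by
            have := Finset.card_nsmul_le_sum S (fun c => Nat.card c.carrier) 4 hall4
            simp only [smul_eq_mul, mul_comm] at this
            omega
          refine myDivHelper _ _ _ hn0 ?_
          have hlight := real_light (n : ℝ) (S.card : ℝ) (((3:ℝ)⁻¹) ^ t) (((4:ℝ)⁻¹) ^ t)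
            (by exact_mod_cast h12) (by positivity)
            (by
              have h1 : (4 * S.card : ℕ) ≤ n - 1 := hS4
              have h2 : ((4 * S.card : ℕ) : ℝ) ≤ ((n - 1 : ℕ) : ℝ) := by exact_mod_cast h1
              rw [Nat.cast_sub (by omega : 1 ≤ n)] at h2
              push_cast at h2 ⊢
              linarith) hu0 hu3 hv0 hvu
          nlinarith [hsT, hlight]
        · -- n ≤ 11, no valid configuration
          push_neg at h12
          exfalso
          interval_cases n
          · have hempty : S = ∅ := Finset.eq_empty_of_forall_notMem fun c hc => by
              have := hmin c hc; have := hub c hc; omega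
            rw [hempty] at hS; simp at hS
          · exact absurd (by norm_num) h3n
          · have hempty : S = ∅ := Finset.eq_empty_of_forall_notMem fun c hc => by
              have h1 := hall4 c hc; have := hub c hc; omega
            rw [hempty] at hS; simp at hS
          · have hempty : S = ∅ := Finset.eq_empty_of_forall_notMem fun c hc => by
              have h1 := hall4 c hc; have h2 := hub c hc; have h3 := hdvd c hc
              generalize hgen : Nat.card c.carrier = k at h1 h2 h3 ⊢
              interval_cases k <;> omega
            rw [hempty] at hS; simp at hS
          · exact absurd (by norm_num) h3n
          · have hempty : S = ∅ := Finset.eq_empty_of_forall_notMem fun c hc => by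
              have h1 := hall4 c hc; have h2 := hub c hc; have h3 := hdvd c hc
              generalize hgen : Nat.card c.carrier = k at h1 h2 h3 ⊢
              interval_cases k <;> omega
            rw [hempty] at hS; simp at hS
          · -- n = 8
            have hval : ∀ c ∈ S, Nat.card c.carrier = 4 := by
              intro c hc
              have h1 := hall4 c hc; have h2 := hub c hc; have h3 := hdvd c hc
              generalize hgen : Nat.card c.carrier = k at h1 h2 h3 ⊢
              interval_cases k <;> omega
            have := Finset.sum_const_nat hval
            omega
          · exact absurd (by norm_num) h3n
          · -- n = 10
            have hval : ∀ c ∈ S, Nat.card c.carrier = 5 := by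
              intro c hc
              have h1 := hall4 c hc; have h2 := hub c hc; have h3 := hdvd c hc
              generalize hgen : Nat.card c.carrier = k at h1 h2 h3 ⊢
              interval_cases k <;> omega
            have := Finset.sum_const_nat hval
            omega
          · -- n = 11
            have hempty : S = ∅ := Finset.eq_empty_of_forall_notMem fun c hc => by
              have h1 := hall4 c hc; have h2 := hub c hc; have h3 := hdvd c hc
              generalize hgen : Nat.card c.carrier = k at h1 h2 h3 ⊢
              interval_cases k <;> omega
            rw [hempty] at hS; simp at hS

end Terminal


theorem main_aux (M : ℕ) : ∀ (G : Type) [Group G] [Fintype G] (h : ℕ),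
    Nat.card G ≤ M →
    ((Nat.card G : ℝ)⁻¹ * ∑ᶠ c : ConjClasses G, ((Nat.card c.carrier : ℝ))⁻¹ ^ (h - 1)
          > (1 / 12) * (1 + 1 / 3 ^ (h - 1) + 2 / 4 ^ (h - 1))) → IsSupersolvable G := by
  induction M with
  | zero =>
    intro G _ _ h hcard hq
    exfalso
    have : 0 < Nat.card G := Nat.card_pos
    omega
  | succ M ih =>
    intro G _G _F h hcard hq
    by_cases htriv : Nat.card G = 1
    · haveI : Subsingleton G := (Nat.card_eq_one_iff_unique.1 htriv).1
      exact isSupersolvable_of_subsingleton G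
    by_cases hcyc : ∃ z : G, z ≠ 1 ∧ (Subgroup.zpowers z).Normal
    · obtain ⟨z, hz1, hzN⟩ := hcyc
      haveI := hzN
      haveI : Fintype (G ⧸ Subgroup.zpowers z) := Fintype.ofFinite _
      have hGcard : Nat.card G
          = Nat.card (G ⧸ Subgroup.zpowers z) * Nat.card (Subgroup.zpowers z) :=
        Subgroup.card_eq_card_quotient_mul_card_subgroup _
      have hN2 : 1 < Nat.card (Subgroup.zpowers z) :=
        (Subgroup.one_lt_card_iff_ne_bot _).2 (by simpa [Subgroup.zpowers_eq_bot] using hz1)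
      have hG2 : 2 ≤ Nat.card G := by
        have : 0 < Nat.card G := Nat.card_pos
        omega
      have h2Q : 2 * Nat.card (G ⧸ Subgroup.zpowers z) ≤ Nat.card G := by
        calc 2 * Nat.card (G ⧸ Subgroup.zpowers z)
            = Nat.card (G ⧸ Subgroup.zpowers z) * 2 := by ring
        _ ≤ Nat.card (G ⧸ Subgroup.zpowers z) * Nat.card (Subgroup.zpowers z) :=
            Nat.mul_le_mul_left _ hN2
        _ = Nat.card G := hGcard.symm
      have hQpos : 0 < Nat.card (G ⧸ Subgroup.zpowers z) := Nat.card_pos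
      have hQcard : Nat.card (G ⧸ Subgroup.zpowers z) ≤ M := by omega
      have e1 := finsum_class_eq_elem (H := G) (h - 1)
      have e2 := finsum_class_eq_elem (H := G ⧸ Subgroup.zpowers z) (h - 1)
      have hmono := avg_le_quotient (G := G) (Subgroup.zpowers z) (h - 1 + 1)
      rw [e1] at hq
      have hq' : (Nat.card (G ⧸ Subgroup.zpowers z) : ℝ)⁻¹ *
          ∑ᶠ c : ConjClasses (G ⧸ Subgroup.zpowers z), ((Nat.card c.carrier : ℝ))⁻¹ ^ (h - 1)
          > (1 / 12) * (1 + 1 / 3 ^ (h - 1) + 2 / 4 ^ (h - 1)) := by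
        rw [e2]
        exact lt_of_lt_of_le hq hmono
      exact quotient_step hzN (ih (G ⧸ Subgroup.zpowers z) h hQcard hq')
    · push_neg at hcyc
      have hn2 : 2 ≤ Nat.card G := by
        have : 0 < Nat.card G := Nat.card_pos
        omega
      exact (terminal_contra G (h - 1) hcyc hn2 hq).elim


/-- **Theorem (dual genus-h supersolvability criterion).**
If `q̃_h(G) > q̃_h(A_4) = (1/12)(1 + 1/3^(h-1) + 2/4^(h-1))`, then `G` is supersolvable.
Here `q̃_h(G) = (1/|G|) * Σ_{C ∈ Cl(G)} (1/|C|)^(h-1)`, the sum running over the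
conjugacy classes of `G`. -/
theorem qth_gt_A4_imp_supersolvable (G : Type) [Group G] [Fintype G] (h : ℕ) (hh : 1 ≤ h)
    (hq : (Nat.card G : ℝ)⁻¹ * ∑ᶠ c : ConjClasses G, ((Nat.card c.carrier : ℝ))⁻¹ ^ (h - 1)
          > (1 / 12) * (1 + 1 / 3 ^ (h - 1) + 2 / 4 ^ (h - 1))) :
    IsSupersolvable G :=
  main_aux (Nat.card G) G h le_rfl hq
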